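/- arXiv:2202.12546 — 5 statements merged into one kernel-verified Lean document; each statement's English description precedes it below -/
import Mathlib

section
/- Fix a node i ∈ Fin n. Let q : Fin h → Fin n → ℝ be any path-wise feasible randomized update rule at i, i.e., for every w ∈ Fin h: q w y ≥ 0 for all y, ∑_y q w y = 1, and q w y = 0 whenever y ∉ H i w. Define the induced transition probability ν : Fin n → ℝ by ν j := ∑_w μ w · q w j. Then for every j ∈ Fin n one has 0 ≤ ℓ_{i,j} ≤ ν j ≤ m_{i,j} ≤ 1. (Theorem 1: the quantities ℓ_{i,j} and m_{i,j} are lower and upper bounds on the transition probability from node i to node j along any stochastic directed path.) -/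
/-!
Both bounds compare `ν j = ∑ w, μ w * q w j` with a weighted count of topologies, topology by
topology: when `H i w = {j}` feasibility forces `q w j = 1`, and when `j ∉ H i w` it forces
`q w j = 0`, while always `0 ≤ q w j ≤ 1`.
-/

open Finset

section WeightedSums

variable {ι : Type*} [Fintype ι] (μ f : ι → ℝ) (p : ι → Prop) [DecidablePred p]

theorem sum_filter_le_sum_mul_of_eq_one (hμ : ∀ w, 0 ≤ μ w) (hf0 : ∀ w, 0 ≤ f w)
    (hf1 : ∀ w, p w → f w = 1) :
    ∑ w ∈ univ.filter p, μ w ≤ ∑ w, μ w * f w := by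
  rw [sum_filter]
  refine sum_le_sum fun w _ => ?_
  split_ifs with hw
  · rw [hf1 w hw, mul_one]
  · exact mul_nonneg (hμ w) (hf0 w)

theorem sum_mul_le_sum_filter_of_eq_zero (hμ : ∀ w, 0 ≤ μ w) (hf1 : ∀ w, f w ≤ 1)
    (hf0 : ∀ w, ¬p w → f w = 0) :
    ∑ w, μ w * f w ≤ ∑ w ∈ univ.filter p, μ w := by
  rw [sum_filter]
  refine sum_le_sum fun w _ => ?_
  split_ifs with hw
  · exact mul_le_of_le_one_right (hμ w) (hf1 w)
  · rw [hf0 w hw, mul_zero]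

end WeightedSums

section ProbabilityVectors

variable {α : Type*} [Fintype α] {p : α → ℝ}

theorem le_one_of_sum_eq_one (hp0 : ∀ y, 0 ≤ p y) (hp1 : ∑ y, p y = 1) (j : α) : p j ≤ 1 :=
  hp1 ▸ single_le_sum (fun y _ => hp0 y) (mem_univ j)

theorem eq_one_of_sum_eq_one_of_eq_zero_of_ne {j : α} (hp1 : ∑ y, p y = 1)
    (hp0 : ∀ y, y ≠ j → p y = 0) : p j = 1 := by
  rwa [Fintype.sum_eq_single j hp0] at hp1

end ProbabilityVectors

theorem transition_probability_bounds_general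
    (n h : ℕ)
    (H : Fin n → Fin h → Finset (Fin n))
    (μ : Fin h → ℝ) (hμ0 : ∀ w, 0 ≤ μ w) (hμ1 : ∑ w, μ w = 1)
    (i : Fin n)
    (q : Fin h → Fin n → ℝ)
    (hq0 : ∀ w y, 0 ≤ q w y)
    (hq1 : ∀ w, ∑ y, q w y = 1)
    (hqsupp : ∀ w y, y ∉ H i w → q w y = 0)
    (j : Fin n) :
    0 ≤ ∑ w ∈ Finset.univ.filter (fun w => H i w = {j}), μ w ∧
    ∑ w ∈ Finset.univ.filter (fun w => H i w = {j}), μ w ≤ ∑ w, μ w * q w j ∧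
    ∑ w, μ w * q w j ≤ ∑ w ∈ Finset.univ.filter (fun w => j ∈ H i w), μ w ∧
    ∑ w ∈ Finset.univ.filter (fun w => j ∈ H i w), μ w ≤ 1 := by
  have hq_le_one : ∀ w, q w j ≤ 1 := fun w => le_one_of_sum_eq_one (hq0 w) (hq1 w) j
  have hq_singleton : ∀ w, H i w = {j} → q w j = 1 := fun w hw =>
    eq_one_of_sum_eq_one_of_eq_zero_of_ne (hq1 w) fun y hy => hqsupp w y (by simpa [hw])
  refine ⟨sum_nonneg fun w _ => hμ0 w, ?_, ?_, ?_⟩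
  · exact sum_filter_le_sum_mul_of_eq_one μ (q · j) _ hμ0 (hq0 · j) hq_singleton
  · exact sum_mul_le_sum_filter_of_eq_zero μ (q · j) _ hμ0 hq_le_one (hqsupp · j)
  · exact hμ1 ▸ sum_le_sum_of_subset_of_nonneg (filter_subset _ _) fun w _ _ => hμ0 w

/-- **Theorem 1** (bounds on transition probabilities).  Fix a node `i`.  For any
path-wise feasible randomized update rule `q` at `i`, the induced transition
probability `ν j = ∑ w, μ w * q w j` satisfies `0 ≤ ℓ i j ≤ ν j ≤ m i j ≤ 1`. -/
theorem transition_probability_bounds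
    (n h : ℕ) (hn : 1 ≤ n) (hh : 1 ≤ h)
    (H : Fin n → Fin h → Finset (Fin n))
    (hne : ∀ i w, (H i w).Nonempty)
    (μ : Fin h → ℝ) (hμ0 : ∀ w, 0 ≤ μ w) (hμ1 : ∑ w, μ w = 1)
    (i : Fin n)
    (q : Fin h → Fin n → ℝ)
    (hq0 : ∀ w y, 0 ≤ q w y)
    (hq1 : ∀ w, ∑ y, q w y = 1)
    (hqsupp : ∀ w y, y ∉ H i w → q w y = 0)
    (j : Fin n) :
    0 ≤ ∑ w ∈ Finset.univ.filter (fun w => H i w = {j}), μ w ∧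
    ∑ w ∈ Finset.univ.filter (fun w => H i w = {j}), μ w ≤ ∑ w, μ w * q w j ∧
    ∑ w, μ w * q w j ≤ ∑ w ∈ Finset.univ.filter (fun w => j ∈ H i w), μ w ∧
    ∑ w ∈ Finset.univ.filter (fun w => j ∈ H i w), μ w ≤ 1 :=
  transition_probability_bounds_general n h H μ hμ0 hμ1 i q hq0 hq1 hqsupp j
end

section
/- Fix nodes i, j ∈ Fin n. There exists a map g : Fin h → Fin n with g w ∈ H i w for all w such that ∑_{w : g w = j} μ w = m_{i,j}. (Tightness of the upper bound in Theorem 1: some path-wise feasible deterministic update rule at node i attains transition probability m_{i,j} to node j.) -/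
theorem Finset.exists_forall_mem_and_eq_iff_mem {ι α : Type*} (S : ι → Finset α)
    (hS : ∀ w, (S w).Nonempty) (a : α) :
    ∃ g : ι → α, ∀ w, g w ∈ S w ∧ (g w = a ↔ a ∈ S w) := by
  classical
  refine ⟨fun w => if a ∈ S w then a else (hS w).choose, fun w => ?_⟩
  by_cases ha : a ∈ S w
  · simp only [ha, if_true, true_and]
  · simp only [ha, if_false, iff_false]
    exact ⟨(hS w).choose_spec, fun h => ha (h ▸ (hS w).choose_spec)⟩

theorem upper_bound_tight_general
    (n h : ℕ)
    (H : Fin n → Fin h → Finset (Fin n))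
    (hne : ∀ i w, (H i w).Nonempty)
    (μ : Fin h → ℝ)
    (i j : Fin n) :
    ∃ g : Fin h → Fin n, (∀ w, g w ∈ H i w) ∧
      ∑ w ∈ Finset.univ.filter (fun w => g w = j), μ w
        = ∑ w ∈ Finset.univ.filter (fun w => j ∈ H i w), μ w := by
  obtain ⟨g, hg⟩ := Finset.exists_forall_mem_and_eq_iff_mem (H i) (hne i) j
  exact ⟨g, fun w => (hg w).1, by rw [Finset.filter_congr fun w _ => (hg w).2]⟩

/-- Tightness of the upper bound in Theorem 1: some path-wise feasible
deterministic update rule at node `i` attains transition probability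
`m i j = ∑_{w : j ∈ H i w} μ w` to node `j`. -/
theorem upper_bound_tight
    (n h : ℕ) (hn : 1 ≤ n) (hh : 1 ≤ h)
    (H : Fin n → Fin h → Finset (Fin n))
    (hne : ∀ i w, (H i w).Nonempty)
    (μ : Fin h → ℝ) (hμ0 : ∀ w, 0 ≤ μ w) (hμ1 : ∑ w, μ w = 1)
    (i j : Fin n) :
    ∃ g : Fin h → Fin n, (∀ w, g w ∈ H i w) ∧
      ∑ w ∈ Finset.univ.filter (fun w => g w = j), μ w
        = ∑ w ∈ Finset.univ.filter (fun w => j ∈ H i w), μ w :=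
  upper_bound_tight_general n h H hne μ i j
end

section
/- Fix nodes i, j ∈ Fin n. There exists a map g : Fin h → Fin n with g w ∈ H i w for all w such that ∑_{w : g w = j} μ w = ℓ_{i,j}. (Tightness of the lower bound in Theorem 1: some path-wise feasible deterministic update rule at node i attains transition probability ℓ_{i,j} to node j.) -/
theorem Finset.Nonempty.exists_mem_eq_iff_eq_singleton {α : Type*} {s : Finset α}
    (hs : s.Nonempty) (a : α) : ∃ x ∈ s, (x = a ↔ s = {a}) := by
  by_cases hsa : s = {a}
  · exact ⟨a, by simp [hsa], by simp [hsa]⟩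
  · obtain ⟨x, hx, hxa⟩ : ∃ x ∈ s, x ≠ a := by
      by_contra! hall
      exact hsa (Finset.eq_singleton_iff_nonempty_unique_mem.2 ⟨hs, hall⟩)
    exact ⟨x, hx, iff_of_false hxa hsa⟩

theorem exists_selector_eq_iff_eq_singleton {ι α : Type*} {s : ι → Finset α}
    (hs : ∀ w, (s w).Nonempty) (a : α) :
    ∃ g : ι → α, (∀ w, g w ∈ s w) ∧ ∀ w, (g w = a ↔ s w = {a}) := by
  choose g hg_mem hg_iff using fun w => (hs w).exists_mem_eq_iff_eq_singleton a
  exact ⟨g, hg_mem, hg_iff⟩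

theorem lower_bound_tight_general
    (n h : ℕ)
    (H : Fin n → Fin h → Finset (Fin n))
    (hne : ∀ i w, (H i w).Nonempty)
    (μ : Fin h → ℝ)
    (i j : Fin n) :
    ∃ g : Fin h → Fin n, (∀ w, g w ∈ H i w) ∧
      ∑ w ∈ Finset.univ.filter (fun w => g w = j), μ w
        = ∑ w ∈ Finset.univ.filter (fun w => H i w = {j}), μ w := by
  obtain ⟨g, hg_mem, hg_iff⟩ := exists_selector_eq_iff_eq_singleton (hne i) j
  exact ⟨g, hg_mem, Finset.sum_congr (Finset.filter_congr fun w _ => hg_iff w) fun _ _ => rfl⟩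

/-- Tightness of the lower bound in Theorem 1: some path-wise feasible
deterministic update rule at node `i` attains transition probability
`ℓ i j = ∑_{w : H i w = {j}} μ w` to node `j`. -/
theorem lower_bound_tight
    (n h : ℕ) (hn : 1 ≤ n) (hh : 1 ≤ h)
    (H : Fin n → Fin h → Finset (Fin n))
    (hne : ∀ i w, (H i w).Nonempty)
    (μ : Fin h → ℝ) (hμ0 : ∀ w, 0 ≤ μ w) (hμ1 : ∑ w, μ w = 1)
    (i j : Fin n) :
    ∃ g : Fin h → Fin n, (∀ w, g w ∈ H i w) ∧
      ∑ w ∈ Finset.univ.filter (fun w => g w = j), μ w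
        = ∑ w ∈ Finset.univ.filter (fun w => H i w = {j}), μ w :=
  lower_bound_tight_general n h H hne μ i j
end

section
/- For every horizon k ∈ ℕ and every node x ∈ Fin n, the weak reachability probability of Q satisfies 𝔯_Q(k,x) := sSup { hit F k x : F a policy } = m_Q k x, and the supremum is attained: there exists a policy F* with hit F* k x = m_Q k x. (Proposition 1 together with Remark 4: the maximal probability that a stochastic directed path starting at x visits Q within k steps equals the optimal state-value function of the associated Markov decision process, computed by the backward recursion m_Q.) -/
/-- The backward recursion `m_Q` for the weak reachability probabilities. -/
noncomputable def mQ (n h : ℕ) (H : Fin n → Fin h → Finset (Fin n))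
    (hne : ∀ i w, (H i w).Nonempty) (μ : Fin h → ℝ) (Q : Finset (Fin n)) :
    ℕ → Fin n → ℝ
  | 0, _ => 0
  | k + 1, x => ∑ w, μ w * (H x w).sup' (hne x w)
      (fun y => if y ∈ Q then 1 else mQ n h H hne μ Q k y)

/-- `hitQ n h μ Q k F x`: probability that the chain driven by the policy `F`
(a sequence of selections of `H`) started at `x` visits `Q` within `k` steps. -/
noncomputable def hitQ (n h : ℕ) (μ : Fin h → ℝ) (Q : Finset (Fin n)) :
    ℕ → (ℕ → Fin n → Fin h → Fin n) → Fin n → ℝ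
  | 0, _, _ => 0
  | k + 1, F, x => ∑ w, μ w *
      (if (F 0) x w ∈ Q then 1
       else hitQ n h μ Q k (fun t => F (t + 1)) ((F 0) x w))

lemma hit_le (n h : ℕ) (H : Fin n → Fin h → Finset (Fin n))
    (hne : ∀ i w, (H i w).Nonempty) (μ : Fin h → ℝ) (hμ0 : ∀ w, 0 ≤ μ w)
    (Q : Finset (Fin n)) :
    ∀ k (F : ℕ → Fin n → Fin h → Fin n), (∀ t i w, F t i w ∈ H i w) →
      ∀ x, hitQ n h μ Q k F x ≤ mQ n h H hne μ Q k x := by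
  intro k
  induction k with
  | zero => intro F hF x; simp [hitQ, mQ]
  | succ k ih =>
    intro F hF x
    simp only [hitQ, mQ]
    refine Finset.sum_le_sum fun w _ => mul_le_mul_of_nonneg_left ?_ (hμ0 w)
    have hy : F 0 x w ∈ H x w := hF 0 x w
    have hle := Finset.le_sup' (f := fun y => if y ∈ Q then (1:ℝ) else mQ n h H hne μ Q k y) hy
    by_cases hq : F 0 x w ∈ Q
    · simpa only [hq, if_true] using hle
    · simp only [hq, if_neg, if_false] at hle ⊢
      exact le_trans (ih _ (fun t i w => hF (t+1) i w) _) (by simpa only [hq, if_false] using hle)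

lemma exists_opt (n h : ℕ) (H : Fin n → Fin h → Finset (Fin n))
    (hne : ∀ i w, (H i w).Nonempty) (μ : Fin h → ℝ)
    (Q : Finset (Fin n)) :
    ∀ k, ∃ F : ℕ → Fin n → Fin h → Fin n, (∀ t i w, F t i w ∈ H i w) ∧
      ∀ x, hitQ n h μ Q k F x = mQ n h H hne μ Q k x := by
  intro k
  induction k with
  | zero =>
    refine ⟨fun _ i w => (hne i w).choose, fun t i w => (hne i w).choose_spec, fun x => ?_⟩
    simp [hitQ, mQ]
  | succ k ih =>
    obtain ⟨F', hF', hval⟩ := ih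
    have hg : ∀ i w, ∃ y, y ∈ H i w ∧
        (H i w).sup' (hne i w) (fun y => if y ∈ Q then (1:ℝ) else mQ n h H hne μ Q k y)
          = (if y ∈ Q then (1:ℝ) else mQ n h H hne μ Q k y) := by
      intro i w
      obtain ⟨y, hy, hy2⟩ := Finset.exists_mem_eq_sup' (hne i w)
        (fun y => if y ∈ Q then (1:ℝ) else mQ n h H hne μ Q k y)
      exact ⟨y, hy, hy2⟩
    choose g hg1 hg2 using hg
    refine ⟨fun t => Nat.rec g (fun t' _ => F' t') t, ?_, fun x => ?_⟩
    · intro t i w; cases t with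
      | zero => exact hg1 i w
      | succ t => exact hF' t i w
    · show hitQ n h μ Q (k+1) (fun t => Nat.rec g (fun t' _ => F' t') t) x = _
      simp only [hitQ, mQ]
      refine Finset.sum_congr rfl fun w _ => ?_
      congr 1
      rw [hg2 x w]
      show (if g x w ∈ Q then (1:ℝ) else hitQ n h μ Q k F' (g x w)) = _
      by_cases hq : g x w ∈ Q
      · simp [hq]
      · simp only [hq, if_false]
        exact hval _

/-- **Proposition 1 + Remark 4** (weak reachability): the maximal probability
that a stochastic directed path starting at `x` visits `Q` within `k` steps
equals the optimal state-value function `m_Q k x`, and the supremum is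
attained by some policy. -/
theorem weak_reachability_eq_optimal_value
    (n h : ℕ) (hn : 1 ≤ n) (hh : 1 ≤ h)
    (H : Fin n → Fin h → Finset (Fin n))
    (hne : ∀ i w, (H i w).Nonempty)
    (μ : Fin h → ℝ) (hμ0 : ∀ w, 0 ≤ μ w) (hμ1 : ∑ w, μ w = 1)
    (Q : Finset (Fin n)) (k : ℕ) (x : Fin n) :
    sSup {r : ℝ | ∃ F : ℕ → Fin n → Fin h → Fin n,
        (∀ t i w, F t i w ∈ H i w) ∧ r = hitQ n h μ Q k F x}
      = mQ n h H hne μ Q k x ∧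
    ∃ F : ℕ → Fin n → Fin h → Fin n, (∀ t i w, F t i w ∈ H i w) ∧
      hitQ n h μ Q k F x = mQ n h H hne μ Q k x := by
  obtain ⟨F₀, hF₀, hv₀⟩ := exists_opt n h H hne μ Q k
  have hmem : mQ n h H hne μ Q k x ∈ {r : ℝ | ∃ F : ℕ → Fin n → Fin h → Fin n,
      (∀ t i w, F t i w ∈ H i w) ∧ r = hitQ n h μ Q k F x} :=
    ⟨F₀, hF₀, (hv₀ x).symm⟩
  have hub : ∀ r ∈ {r : ℝ | ∃ F : ℕ → Fin n → Fin h → Fin n,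
      (∀ t i w, F t i w ∈ H i w) ∧ r = hitQ n h μ Q k F x}, r ≤ mQ n h H hne μ Q k x := by
    rintro r ⟨F, hF, rfl⟩
    exact hit_le n h H hne μ hμ0 Q k F hF x
  constructor
  · exact le_antisymm (csSup_le ⟨_, hmem⟩ hub) (le_csSup ⟨_, hub⟩ hmem)
  · exact ⟨F₀, hF₀, hv₀ x⟩
end

section
/- Let S and A be finite nonempty types, p : S → A → PMF S a transition kernel, π : S → PMF A a stationary randomized policy, and r : S → A → S → ℝ a reward function. For k ∈ ℕ and x : S, let v_π(k, x) denote the expectation, under the k-step trajectory distribution from x (the PMF on length-k lists of action–state pairs obtained by iterated monadic bind: sample a ∼ π x, then x′ ∼ p x a, record (a, x′), and continue from x′), of the total reward ∑ r along the trajectory (summing r of current state, action, next state over the k steps). Then v_π(0, x) = 0 and, for every k ≥ 1 and x, the Bellman equation holds: v_π(k, x) = ∑_{a : A} (π x) a · ∑_{j : S} (p x a) j · ( r x a j + v_π(k−1, j) ). (Equation (9): the state-value function for π satisfies Bellman's principle of optimality.) -/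
open scoped Classical


/-- The `k`-step trajectory distribution from `x`: sample `a ∼ π x`, then
`x' ∼ p x a`, record `(a, x')`, and continue from `x'`. -/
noncomputable def traj {S A : Type*} (p : S → A → PMF S) (π : S → PMF A) :
    ℕ → S → PMF (List (A × S))
  | 0, _ => PMF.pure []
  | k + 1, x => (π x).bind fun a => (p x a).bind fun x' =>
      (traj p π k x').map fun l => (a, x') :: l

/-- The total reward gathered along a trajectory starting at a given state. -/
def totalReward {S A : Type*} (r : S → A → S → ℝ) : S → List (A × S) → ℝ
  | _, [] => 0
  | x, (a, x') :: l => r x a x' + totalReward r x' l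

/-- The state-value function for the policy `π`: the expectation of the total
reward under the `k`-step trajectory distribution from `x`. -/
noncomputable def statevalue {S A : Type*} (p : S → A → PMF S) (π : S → PMF A)
    (r : S → A → S → ℝ) (k : ℕ) (x : S) : ℝ :=
  ∑' l : List (A × S), ((traj p π k x) l).toReal * totalReward r x l

theorem traj_length {S A : Type*} (p : S → A → PMF S) (π : S → PMF A) :
    ∀ (k : ℕ) (x : S) (l : List (A × S)), traj p π k x l ≠ 0 → l.length = k := by
  intro k
  induction k with
  | zero => intro x l h; simp [traj, PMF.pure_apply] at h; simp [h]
  | succ k ih =>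
    intro x l h
    simp only [traj, PMF.bind_apply, PMF.map_apply, ne_eq, ENNReal.tsum_eq_zero,
      not_forall, mul_eq_zero, not_or] at h
    obtain ⟨a, ha, j, hj, l', hl'⟩ := h
    by_cases hc : l = (a, j) :: l'
    · subst hc
      simp only [if_true] at hl'
      simp [ih j l' (by simpa using hl')]
    · simp [hc] at hl'

theorem traj_cons {S A : Type*} (p : S → A → PMF S) (π : S → PMF A)
    (k : ℕ) (x : S) (a : A) (j : S) (l : List (A × S)) :
    traj p π (k+1) x ((a, j) :: l) = π x a * (p x a j * traj p π k j l) := by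
  simp only [traj, PMF.bind_apply, PMF.map_apply]
  rw [tsum_eq_single a ?ha]
  case ha => intro a' ha'; simp [Ne.symm ha']
  rw [tsum_eq_single j ?hj]
  case hj => intro j' hj'; simp [Ne.symm hj']
  rw [tsum_eq_single l ?hl]
  case hl => intro l' hl'; simp [Ne.symm hl']
  simp

theorem statevalue_eq_sum {S A : Type*} [Fintype S] [Fintype A]
    (p : S → A → PMF S) (π : S → PMF A) (r : S → A → S → ℝ) (k : ℕ) (x : S) :
    (∑' l : List (A × S), ((traj p π k x) l).toReal * totalReward r x l) =
      ∑ f : Fin k → A × S, ((traj p π k x) (List.ofFn f)).toReal * totalReward r x (List.ofFn f) := by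
  rw [tsum_eq_sum (s := Finset.univ.image fun f : Fin k → A × S => List.ofFn f) ?h]
  · rw [Finset.sum_image (fun f _ g _ h => List.ofFn_injective h)]
  case h =>
    intro l hl
    have hlen : l.length ≠ k := by
      intro hlen
      subst hlen
      exact hl (Finset.mem_image.mpr ⟨l.get, Finset.mem_univ _, List.ofFn_get l⟩)
    have h0 : traj p π k x l = 0 := by
      by_contra h; exact hlen (traj_length p π k x l h)
    simp [h0]

theorem traj_mass {S A : Type*} [Fintype S] [Fintype A]
    (p : S → A → PMF S) (π : S → PMF A) (k : ℕ) (x : S) :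
    (∑ f : Fin k → A × S, ((traj p π k x) (List.ofFn f)).toReal) = 1 := by
  have h := (traj p π k x).tsum_coe
  rw [tsum_eq_sum (s := Finset.univ.image fun f : Fin k → A × S => List.ofFn f) ?h] at h
  · rw [Finset.sum_image (fun f _ g _ h => List.ofFn_injective h)] at h
    have := congrArg ENNReal.toReal h
    rw [ENNReal.toReal_sum (fun f _ => PMF.apply_ne_top _ _)] at this
    simpa using this
  case h =>
    intro l hl
    have hlen : l.length ≠ k := by
      intro hlen
      subst hlen
      exact hl (Finset.mem_image.mpr ⟨l.get, Finset.mem_univ _, List.ofFn_get l⟩)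
    by_contra h0
    exact hlen (traj_length p π k x l h0)

/-- **Equation (9)**: the state-value function for `π` satisfies `v_π(0,x) = 0`
and Bellman's equation
`v_π(k,x) = ∑_a π(a|x) ∑_j p(j|x,a) (r(x,a,j) + v_π(k-1,j))` for `k ≥ 1`. -/
theorem state_value_bellman
    {S A : Type*} [Fintype S] [Nonempty S] [Fintype A] [Nonempty A]
    (p : S → A → PMF S) (π : S → PMF A) (r : S → A → S → ℝ) :
    (∀ x, statevalue p π r 0 x = 0) ∧
    ∀ (k : ℕ) (x : S), 1 ≤ k →
      statevalue p π r k x = ∑ a, ((π x) a).toReal *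
        ∑ j, ((p x a) j).toReal * (r x a j + statevalue p π r (k - 1) j) := by
  constructor
  · intro x
    rw [statevalue]
    have h : ∀ l : List (A × S), ((traj p π 0 x) l).toReal * totalReward r x l = 0 := by
      intro l
      match l with
      | [] => simp [totalReward]
      | q :: t => simp [traj, PMF.pure_apply]
    rw [tsum_congr h, tsum_zero]
  · intro k x hk
    obtain ⟨m, rfl⟩ : ∃ m, k = m + 1 := ⟨k - 1, (Nat.succ_pred_eq_of_pos hk).symm⟩
    simp only [Nat.add_sub_cancel]
    rw [statevalue, statevalue_eq_sum]
    rw [Fintype.sum_equiv (Fin.consEquiv fun _ : Fin (m + 1) => A × S).symm _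
      (fun q => ((π x q.1.1).toReal * ((p x q.1.1 q.1.2).toReal *
          (traj p π m q.1.2 (List.ofFn q.2)).toReal)) *
        (r x q.1.1 q.1.2 + totalReward r q.1.2 (List.ofFn q.2))) ?he]
    case he =>
      intro g
      have hc : traj p π (m + 1) x (List.ofFn g) =
          π x (g 0).1 * (p x (g 0).1 (g 0).2 * traj p π m (g 0).2 (List.ofFn fun i => g i.succ)) := by
        rw [List.ofFn_succ]; exact traj_cons p π m x (g 0).1 (g 0).2 _
      have ht : totalReward r x (List.ofFn g) =
          r x (g 0).1 (g 0).2 + totalReward r (g 0).2 (List.ofFn fun i => g i.succ) := by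
        rw [List.ofFn_succ]; rfl
      rw [hc, ht, ENNReal.toReal_mul, ENNReal.toReal_mul]
      rfl
    rw [Fintype.sum_prod_type, Fintype.sum_prod_type]
    have inner : ∀ a (j : S), (∑ f : Fin m → A × S,
        (traj p π m j (List.ofFn f)).toReal * (r x a j + totalReward r j (List.ofFn f))) =
        r x a j + statevalue p π r m j := by
      intro a j
      rw [statevalue, statevalue_eq_sum]
      simp only [mul_add, Finset.sum_add_distrib, ← Finset.sum_mul, traj_mass, one_mul]
    refine Finset.sum_congr rfl fun a _ => ?_
    simp only [mul_assoc, ← Finset.mul_sum]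
    congr 1
    refine Finset.sum_congr rfl fun j _ => ?_
    congr 1
    exact inner a j
end
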